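/- Let P be a finite set of positive integers, m = min P, n > m, and Q = {p - m : p ∈ P, p ≠ m} ∪ {m}. Then FW(P,n) is determined by the recursion: FW(P,n)[i] = FW(Q, n-m)[i mod m] if (i mod m) < n - m, and FW(P,n)[i] = i mod m otherwise. -/

import Mathlib

/-!
Write `m = mP P`, `n' = n - m` and `Q = Qred P`. In `≈_{P,n}` every `i < n` is equivalent to
its residue `i % m`, and a jump of length `p ∈ P`, `p ≠ m`, moves residues exactly as a jump of
length `p - m ∈ Q` inside `{0,…,n'-1}` does, since `p = (p - m) + m`. Conversely every
`Q`-step inside `{0,…,n'-1}` is a `P`-step followed by a step back by `m`, and residues mod `m`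
are `Q`-connected there because `m ∈ Q`. So `i ≈_{P,n} j` iff `i % m ≈_{Q,n'} j % m`; as `Q`
only relates points below `n'`, a residue `≥ n'` is alone in its `Q`-class and is then the
least element of its `P`-class.
-/

/-- minimum of a finite set of naturals (as `sInf`). -/
noncomputable def mP (P : Finset ℕ) : ℕ := sInf (↑P : Set ℕ)

/-- the generating relation `∼_{P,k}` on `{0,…,k-1}`. -/
def simRel (P : Finset ℕ) (k i j : ℕ) : Prop :=
  i < k ∧ j < k ∧ (i % mP P = j % mP P ∨
    ∃ i' j', i' < k ∧ j' < k ∧ i' % mP P = i % mP P ∧ j' % mP P = j % mP P ∧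
      (max i' j' - min i' j') ∈ P)

/-- the class of `i` under the equivalence closure `≈_{P,k}`. -/
def cls (P : Finset ℕ) (k i : ℕ) : Set ℕ := {j | Relation.EqvGen (simRel P k) i j}

/-- the FW-word: `FW P k i = min [i]_{P,k}`. -/
noncomputable def FW (P : Finset ℕ) (k : ℕ) : ℕ → ℕ := fun i => sInf (cls P k i)

/-- Euclidean reduction `Q = {p - m : p ∈ P, p ≠ m} ∪ {m}`. -/
noncomputable def Qred (P : Finset ℕ) : Finset ℕ :=
  ((P.erase (mP P)).image (fun p => p - mP P)) ∪ {mP P}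

/-- `p` is a period of the word `w` of length `n`. -/
def HasPeriodF {A : Type*} (w : ℕ → A) (n p : ℕ) : Prop :=
  ∀ i, i + p < n → w i = w (i + p)

open Relation

theorem eqvGen_of_mod_eq {r : ℕ → ℕ → Prop} {d c : ℕ}
    (step : ∀ x, x + d < c → EqvGen r x (x + d)) {a b : ℕ} (ha : a < c) (hb : b < c)
    (hab : a % d = b % d) : EqvGen r a b := by
  have chain : ∀ k x, x + d * k < c → EqvGen r x (x + d * k) := by
    intro k
    induction k with
    | zero => intro x _; exact .refl x
    | succ k ih =>
      intro x hx
      rw [Nat.mul_succ] at hx ⊢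
      have hnext := ih (x + d) (by omega)
      rw [add_assoc, add_comm d] at hnext
      exact (step x (by omega)).trans _ _ _ hnext
  wlog hle : a ≤ b generalizing a b
  · exact (this hb ha hab.symm (by omega)).symm
  obtain ⟨k, hk⟩ := (Nat.modEq_iff_dvd' hle).mp hab
  obtain rfl : b = a + d * k := by omega
  exact chain k a hb

theorem mP_le {P : Finset ℕ} {p : ℕ} (hp : p ∈ P) : mP P ≤ p := Nat.sInf_le hp

theorem mP_mem_Qred (P : Finset ℕ) : mP P ∈ Qred P :=
  Finset.mem_union_right _ (Finset.mem_singleton_self _)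

theorem sub_mP_mem_Qred {P : Finset ℕ} {p : ℕ} (hp : p ∈ P) (hne : p ≠ mP P) :
    p - mP P ∈ Qred P :=
  Finset.mem_union_left _ (Finset.mem_image_of_mem _ (Finset.mem_erase.mpr ⟨hne, hp⟩))

theorem eq_mP_or_of_mem_Qred {P : Finset ℕ} {q : ℕ} (hq : q ∈ Qred P) :
    q = mP P ∨ ∃ p ∈ P, mP P < p ∧ q = p - mP P := by
  rcases Finset.mem_union.mp hq with hq | hq
  · obtain ⟨p, hp, rfl⟩ := Finset.mem_image.mp hq
    obtain ⟨hne, hp⟩ := Finset.mem_erase.mp hp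
    exact .inr ⟨p, hp, lt_of_le_of_ne (mP_le hp) (Ne.symm hne), rfl⟩
  · exact .inl (Finset.mem_singleton.mp hq)

theorem mP_Qred_mem_Qred (P : Finset ℕ) : mP (Qred P) ∈ Qred P :=
  Nat.sInf_mem ⟨_, mP_mem_Qred P⟩

section simRel

variable {P : Finset ℕ} {k : ℕ}

theorem simRel_of_mod_eq {i j : ℕ} (hi : i < k) (hj : j < k) (h : i % mP P = j % mP P) :
    simRel P k i j :=
  ⟨hi, hj, .inl h⟩

theorem simRel_add {x p : ℕ} (hp : p ∈ P) (h : x + p < k) : simRel P k x (x + p) := by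
  refine ⟨by omega, h, .inr ⟨x, x + p, by omega, h, rfl, rfl, ?_⟩⟩
  rwa [max_eq_right (by omega), min_eq_left (by omega), Nat.add_sub_cancel_left]

theorem eqvGen_simRel_mod_self {i : ℕ} (hi : i < k) : EqvGen (simRel P k) i (i % mP P) :=
  .rel _ _ (simRel_of_mod_eq hi ((Nat.mod_le _ _).trans_lt hi) (Nat.mod_mod _ _).symm)

theorem eq_or_lt_of_eqvGen_simRel {i j : ℕ} (h : EqvGen (simRel P k) i j) :
    i = j ∨ i < k ∧ j < k := by
  induction h with
  | rel a b hab => exact .inr ⟨hab.1, hab.2.1⟩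
  | refl => exact .inl rfl
  | symm a b _ ih => rcases ih with rfl | ⟨ha, hb⟩ <;> tauto
  | trans a b c _ _ ih₁ ih₂ =>
    rcases ih₁ with rfl | ⟨ha, hb⟩ <;> rcases ih₂ with rfl | ⟨hb, hc⟩ <;> tauto

theorem eqvGen_simRel_le {s : ℕ → ℕ → Prop} (hs : Equivalence s)
    (hmod : ∀ i j, i < k → j < k → i % mP P = j % mP P → s i j)
    (hstep : ∀ x p, p ∈ P → x + p < k → s x (x + p)) {i j : ℕ}
    (hij : EqvGen (simRel P k) i j) : s i j := by
  refine hs.eqvGen_iff.mp (EqvGen.mono (fun i j h => ?_) _ _ hij)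
  obtain ⟨hi, hj, hmod_ij | ⟨i', j', hi', hj', hii', hjj', hdist⟩⟩ := h
  · exact hmod i j hi hj hmod_ij
  have hdist' : s i' j' := by
    rcases le_total i' j' with hle | hle
    · rw [max_eq_right hle, min_eq_left hle] at hdist
      simpa [Nat.add_sub_cancel' hle] using hstep i' _ hdist (by omega)
    · rw [max_eq_left hle, min_eq_right hle] at hdist
      exact hs.symm (by simpa [Nat.add_sub_cancel' hle] using hstep j' _ hdist (by omega))
  exact hs.trans (hmod i i' hi hi' hii'.symm) (hs.trans hdist' (hmod j' j hj' hj hjj'))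

end simRel

section Qred

variable {P : Finset ℕ} {n : ℕ}

theorem eqvGen_simRel_Qred_of_mod_eq {a b : ℕ} (ha : a < n - mP P) (hb : b < n - mP P)
    (hab : a % mP P = b % mP P) : EqvGen (simRel (Qred P) (n - mP P)) a b :=
  eqvGen_of_mod_eq (fun _ hx => .rel _ _ (simRel_add (mP_mem_Qred P) hx)) ha hb hab

theorem eqvGen_simRel_add_of_mem_Qred {x q : ℕ} (hq : q ∈ Qred P) (h : x + q < n - mP P) :
    EqvGen (simRel P n) x (x + q) := by
  rcases eq_mP_or_of_mem_Qred hq with rfl | ⟨p, hp, hmp, rfl⟩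
  · exact .rel _ _ (simRel_of_mod_eq (by omega) (by omega) (Nat.add_mod_right x _).symm)
  · have hxp : x + p < n := by omega
    refine (EqvGen.rel _ _ (simRel_add hp hxp)).trans _ _ _ (.rel _ _ ?_)
    refine simRel_of_mod_eq hxp (by omega) ?_
    rw [show x + p = x + (p - mP P) + mP P by omega, Nat.add_mod_right]

theorem eqvGen_simRel_of_eqvGen_simRel_Qred {a b : ℕ}
    (h : EqvGen (simRel (Qred P) (n - mP P)) a b) : EqvGen (simRel P n) a b :=
  eqvGen_simRel_le (EqvGen.is_equivalence _)
    (fun _ _ hi hj hij => eqvGen_of_mod_eq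
      (fun _ hx => eqvGen_simRel_add_of_mem_Qred (mP_Qred_mem_Qred P) hx) hi hj hij)
    (fun _ _ hq hx => eqvGen_simRel_add_of_mem_Qred hq hx) h

theorem eqvGen_simRel_Qred_mod_self {x : ℕ} (hx : x < n - mP P) :
    EqvGen (simRel (Qred P) (n - mP P)) (x % mP P) x :=
  eqvGen_simRel_Qred_of_mod_eq ((Nat.mod_le _ _).trans_lt hx) hx (Nat.mod_mod _ _)

theorem eqvGen_simRel_Qred_mod_add {x p : ℕ} (hp : p ∈ P) (hx : x + p < n) :
    EqvGen (simRel (Qred P) (n - mP P)) (x % mP P) ((x + p) % mP P) := by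
  by_cases hpm : p = mP P
  · rw [hpm, Nat.add_mod_right]
    exact .refl _
  have hmp := mP_le hp
  set q := p - mP P
  have hq : x + q < n - mP P := by omega
  rw [show x + p = x + q + mP P by omega, Nat.add_mod_right]
  have hstep : EqvGen (simRel (Qred P) (n - mP P)) x (x + q) :=
    .rel _ _ (simRel_add (sub_mP_mem_Qred hp hpm) hq)
  exact (eqvGen_simRel_Qred_mod_self (by omega)).trans _ _ _
    (hstep.trans _ _ _ (eqvGen_simRel_Qred_mod_self hq).symm)

theorem eqvGen_simRel_Qred_mod_of_eqvGen_simRel {a b : ℕ} (h : EqvGen (simRel P n) a b) :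
    EqvGen (simRel (Qred P) (n - mP P)) (a % mP P) (b % mP P) :=
  eqvGen_simRel_le ((EqvGen.is_equivalence _).comap (· % mP P))
    (fun _ _ _ _ hij => by rw [Function.onFun, hij]; exact .refl _)
    (fun _ _ hp hx => eqvGen_simRel_Qred_mod_add hp hx) h

end Qred

theorem FW_mem_cls (P : Finset ℕ) (k i : ℕ) : EqvGen (simRel P k) i (FW P k i) :=
  Nat.sInf_mem ⟨i, .refl i⟩

theorem FW_le {P : Finset ℕ} {k i j : ℕ} (h : EqvGen (simRel P k) i j) : FW P k i ≤ j :=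
  Nat.sInf_le h

theorem stmt9_general (P : Finset ℕ)
    (n : ℕ) :
    ∀ i < n, FW P n i =
      if i % mP P < n - mP P then FW (Qred P) (n - mP P) (i % mP P)
      else i % mP P := by
  intro i hi
  have hi_mod : EqvGen (simRel P n) i (i % mP P) := eqvGen_simRel_mod_self hi
  have hFW_mod := eqvGen_simRel_Qred_mod_of_eqvGen_simRel (FW_mem_cls P n i)
  split_ifs with hr
  · refine le_antisymm (FW_le (hi_mod.trans _ _ _ ?_)) ((FW_le hFW_mod).trans (Nat.mod_le _ _))
    exact eqvGen_simRel_of_eqvGen_simRel_Qred (FW_mem_cls _ _ _)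
  · refine le_antisymm (FW_le hi_mod) ?_
    rcases eq_or_lt_of_eqvGen_simRel hFW_mod with h | h
    · exact h ▸ Nat.mod_le _ _
    · omega

theorem stmt9 (P : Finset ℕ) (hP : P.Nonempty) (hpos : ∀ p ∈ P, 0 < p)
    (n : ℕ) (hn : mP P < n) :
    ∀ i < n, FW P n i =
      if i % mP P < n - mP P then FW (Qred P) (n - mP P) (i % mP P)
      else i % mP P :=
  stmt9_general P n
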